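/- arXiv:2209.02325 — 6 statements merged into one kernel-verified Lean document; each statement's English description precedes it below -/
import Mathlib

section
/- Every element f of J_ℤ can be written as f = h ∘ τ^s for a unique integer s and a unique element h of the monoid D_ℤ generated by the right partial shifts, i.e., a unique finite product of right partial shifts. -/
namespace Stmt5Aux

def Sset : Set (Function.End ℤ) :=
  {g : Function.End ℤ | ∃ h : ℤ, g = fun k => if k < h then k else k + 1}

lemma sm_le {h : ℤ → ℤ} (hs : StrictMono h) {a b : ℤ} (hab : a ≤ b) :
    h a + (b - a) ≤ h b := by
  obtain ⟨n, rfl⟩ : ∃ n : ℕ, b = a + n := ⟨(b - a).toNat, by omega⟩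
  induction n with
  | zero => simp
  | succ n ih =>
    have h1 : h (a + n) < h (a + (n + 1 : ℕ)) := hs (by push_cast; omega)
    have h2 := ih (by omega)
    push_cast at *
    omega

lemma min_bad {h : ℤ → ℤ} (hs : StrictMono h) {N : ℤ} (hid : ∀ k ≤ N, h k = k)
    {m : ℤ} (hm : h m ≠ m) (hmin : ∀ k < m, h k = k) :
    m ∉ Set.range h ∧ (∀ k, m ≤ k → k + 1 ≤ h k) := by
  have hmlt : m + 1 ≤ h m := by
    rcases le_or_gt m N with hc | hc
    · exact absurd (hid m hc) hm
    · have := sm_le hs hc.le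
      rw [hid N le_rfl] at this
      omega
  have hge : ∀ k, m ≤ k → k + 1 ≤ h k := by
    intro k hk
    have := sm_le hs hk
    omega
  refine ⟨?_, hge⟩
  rintro ⟨j, hj⟩
  rcases lt_or_ge j m with hc | hc
  · have := hmin j hc; omega
  · have := hge j hc; omega

lemma key : ∀ (n : ℕ) (h : Function.End ℤ), StrictMono h → (Set.range h)ᶜ.Finite →
    (Set.range h)ᶜ.ncard = n → ∀ N : ℤ, (∀ k ≤ N, h k = k) →
    h ∈ Submonoid.closure Sset := by
  intro n
  induction n with
  | zero =>
    intro h hs hfin hcard N hid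
    have hempty : (Set.range h)ᶜ = ∅ := (Set.ncard_eq_zero hfin).mp hcard
    have hsurj : ∀ x : ℤ, x ∈ Set.range h := by
      intro x
      by_contra hx
      exact absurd (show x ∈ (∅ : Set ℤ) from hempty ▸ hx) (Set.notMem_empty x)
    have hi : ∀ k, h k = k := by
      by_contra hc
      push_neg at hc
      obtain ⟨m, hm, hmin⟩ := Int.exists_least_of_bdd (P := fun k => h k ≠ k)
        ⟨N + 1, fun z hz => by
          by_contra hb; exact hz (hid z (by omega))⟩ hc
      have hmin' : ∀ k < m, h k = k := by
        intro k hk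
        by_contra hk'
        have := hmin k hk'; omega
      exact (min_bad hs hid hm hmin').1 (hsurj m)
    have h1 : h = (1 : Function.End ℤ) := funext hi
    rw [h1]
    exact one_mem _
  | succ n ih =>
    intro h hs hfin hcard N hid
    have hne : ∃ k, h k ≠ k := by
      obtain ⟨x, hx⟩ := Set.nonempty_of_ncard_ne_zero (s := (Set.range h)ᶜ) (by omega)
      by_contra hc
      push_neg at hc
      exact hx ⟨x, hc x⟩
    obtain ⟨m, hm, hminle⟩ := Int.exists_least_of_bdd (P := fun k => h k ≠ k)
      ⟨N + 1, fun z hz => by by_contra hb; exact hz (hid z (by omega))⟩ hne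
    have hmin : ∀ k < m, h k = k := by
      intro k hk
      by_contra hk'
      have := hminle k hk'; omega
    obtain ⟨hmnr, hge⟩ := min_bad hs hid hm hmin
    set h' : Function.End ℤ := fun k => if k < m then k else h k - 1 with hh'
    have h'app : ∀ k, h' k = if k < m then k else h k - 1 := fun k => rfl
    have hs' : StrictMono h' := by
      intro a b hab
      rw [h'app, h'app]
      rcases lt_or_ge a m with ha | ha <;> rcases lt_or_ge b m with hb | hb
      · simpa [ha, hb] using hab
      · have := hge b hb
        rw [if_pos ha, if_neg (not_lt.mpr hb)]
        omega
      · omega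
      · have := hs hab
        rw [if_neg (not_lt.mpr ha), if_neg (not_lt.mpr hb)]
        omega
    have hrange : (Set.range h')ᶜ = (fun x : ℤ => x - 1) '' ((Set.range h)ᶜ \ {m}) := by
      ext x
      simp only [Set.mem_compl_iff, Set.mem_range, Set.mem_image, Set.mem_diff,
        Set.mem_singleton_iff, not_exists]
      constructor
      · intro hx
        have hxm : m ≤ x := by
          by_contra hc
          exact hx ⟨x, by rw [h'app, if_pos (by omega)]⟩
        refine ⟨x + 1, ⟨?_, by omega⟩, by omega⟩
        rintro ⟨k, hk⟩
        rcases lt_or_ge k m with hc | hc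
        · have := hmin k hc; omega
        · exact hx ⟨k, by rw [h'app, if_neg (not_lt.mpr hc), hk]; omega⟩
      · rintro ⟨y, ⟨hy, hym⟩, rfl⟩
        have hy' : ∀ k, h k ≠ y := fun k hk => hy ⟨k, hk⟩
        have hym' : m + 1 ≤ y := by
          rcases lt_or_ge y m with hc | hc
          · exact absurd (hmin y hc) (hy' y)
          · omega
        rintro ⟨k, hk⟩
        rw [h'app] at hk
        rcases lt_or_ge k m with hc | hc
        · rw [if_pos hc] at hk; omega
        · rw [if_neg (not_lt.mpr hc)] at hk
          exact hy' k (by omega)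
    have hmem : m ∈ (Set.range h)ᶜ := hmnr
    have hfin' : (Set.range h')ᶜ.Finite := by
      rw [hrange]
      exact ((hfin.subset Set.diff_subset).image _)
    have hcard' : (Set.range h')ᶜ.ncard = n := by
      rw [hrange, Set.ncard_image_of_injective _ sub_left_injective,
        Set.ncard_diff_singleton_of_mem hmem, hcard]
      omega
    have hid' : ∀ k ≤ m - 1, h' k = k := by
      intro k hk
      rw [h'app, if_pos (by omega)]
    have hcl' := ih h' hs' hfin' hcard' (m - 1) hid'
    set θ : Function.End ℤ := fun k => if k < m then k else k + 1 with hθdef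
    have hθ : θ ∈ Sset := ⟨m, hθdef⟩
    have hfact : h = θ * h' := by
      funext k
      show h k = if h' k < m then h' k else h' k + 1
      rw [h'app]
      rcases lt_or_ge k m with hc | hc
      · rw [if_pos hc, if_pos hc, hmin k hc]
      · have := hge k hc
        rw [if_neg (not_lt.mpr hc), if_neg (by omega)]
        omega
    rw [hfact]
    exact mul_mem (Submonoid.subset_closure hθ) hcl'

lemma ev_id {g : Function.End ℤ} (hg : g ∈ Submonoid.closure Sset) :
    ∃ N : ℤ, ∀ k ≤ N, g k = k := by
  induction hg using Submonoid.closure_induction with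
  | mem x hx =>
    obtain ⟨h, rfl⟩ := hx
    exact ⟨h - 1, fun k hk => if_pos (by omega)⟩
  | one => exact ⟨0, fun k _ => rfl⟩
  | mul x y _ _ hx hy =>
    obtain ⟨Nx, hNx⟩ := hx
    obtain ⟨Ny, hNy⟩ := hy
    refine ⟨min Nx Ny, fun k hk => ?_⟩
    show x (y k) = k
    rw [hNy k (by omega), hNx k (by omega)]

end Stmt5Aux

open Stmt5Aux
theorem stmt5 (f : Function.End ℤ)
    (hf : StrictMono f ∧ (Set.range f)ᶜ.Finite) :
    ∃! p : ℤ × Function.End ℤ,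
      p.2 ∈ Submonoid.closure
        {g : Function.End ℤ | ∃ h : ℤ, g = fun k => if k < h then k else k + 1} ∧
      f = fun k => p.2 (k + p.1) := by
  obtain ⟨hmono, hfin⟩ := hf
  -- the set of places where f jumps by more than one is finite
  have hKfin : {k : ℤ | f (k + 1) ≠ f k + 1}.Finite := by
    have himg : (fun k => f k + 1) '' {k : ℤ | f (k + 1) ≠ f k + 1} ⊆ (Set.range f)ᶜ := by
      rintro x ⟨k, hk, hkx⟩
      have hk' : f (k + 1) ≠ f k + 1 := hk
      have hx : x = f k + 1 := hkx.symm
      intro hxr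
      obtain ⟨j, hj⟩ := hxr
      have hj' : f j = x := hj
      have h1 : f k < f (k + 1) := hmono (by omega)
      rcases lt_trichotomy j k with hc | hc | hc
      · have := hmono hc; omega
      · subst hc; omega
      · have : f (k + 1) ≤ f j := hmono.le_iff_le.mpr (by omega)
        omega
    have hinj : Set.InjOn (fun k => f k + 1) {k : ℤ | f (k + 1) ≠ f k + 1} := by
      intro a _ b _ hab
      have hab' : f a + 1 = f b + 1 := hab
      exact hmono.injective (by omega)
    exact Set.Finite.of_finite_image (hfin.subset himg) hinj
  obtain ⟨N, hN⟩ : ∃ N : ℤ, ∀ k < N, f (k + 1) = f k + 1 := by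
    obtain ⟨b, hb⟩ := hKfin.bddBelow
    exact ⟨b, fun k hk => by
      by_contra hc
      have := hb (show k ∈ {k : ℤ | f (k + 1) ≠ f k + 1} from hc)
      omega⟩
  have hdown : ∀ n : ℕ, f (N - n) = f N - n := by
    intro n
    induction n with
    | zero => simp
    | succ n ihn =>
      have h1 : f (N - (n + 1 : ℕ) + 1) = f (N - (n + 1 : ℕ)) + 1 :=
        hN _ (by push_cast; omega)
      have h2 : N - (n + 1 : ℕ) + 1 = N - n := by push_cast; ring
      rw [h2] at h1
      push_cast at *
      omega
  set s : ℤ := f N - N with hs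
  have hflow : ∀ k ≤ N, f k = k + s := by
    intro k hk
    have := hdown (N - k).toNat
    rw [show N - ((N - k).toNat : ℤ) = k by omega] at this
    omega
  set h : Function.End ℤ := fun k => f (k - s) with hh
  have happ : ∀ k, h k = f (k - s) := fun k => rfl
  have hhs : StrictMono h := fun a b hab => hmono (by omega)
  have hhrange : Set.range h = Set.range f := by
    ext x
    constructor
    · rintro ⟨k, rfl⟩; exact ⟨k - s, rfl⟩
    · rintro ⟨k, rfl⟩; exact ⟨k + s, by rw [happ]; congr 1; omega⟩
  have hhid : ∀ k ≤ N + s, h k = k := by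
    intro k hk
    have := hflow (k - s) (by omega)
    rw [happ]
    omega
  have hhmem : h ∈ Submonoid.closure Sset :=
    key ((Set.range h)ᶜ.ncard) h hhs (by rw [hhrange]; exact hfin) rfl (N + s) hhid
  refine ⟨(s, h), ⟨hhmem, ?_⟩, ?_⟩
  · funext k
    show f k = f (k + s - s)
    rw [add_sub_cancel_right]
  · rintro ⟨t, g⟩ ⟨hg, hfg⟩
    obtain ⟨M, hM⟩ := ev_id hg
    have hM' : ∀ k ≤ M, g k = k := hM
    have hflow' : ∀ k, k + t ≤ M → f k = k + t := by
      intro k hk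
      have hfk : f k = g (k + t) := congrFun hfg k
      rw [hfk, hM' _ hk]
    have hst : t = s := by
      set k := min N (M - t) with hk
      have h1 := hflow k (by omega)
      have h2 := hflow' k (by omega)
      omega
    have hgh : g = h := by
      funext x
      have hgx : f (x - t) = g (x - t + t) := congrFun hfg (x - t)
      rw [sub_add_cancel] at hgx
      rw [happ, ← hgx, hst]
    rw [hst, hgh]
end

section
/- The monoid J_ℤ is finitely generated: it is generated as a monoid by the three elements τ, τ^{-1}, and θ_0, where τ(i) = i + 1 and θ_0(k) = k for k < 0, θ_0(k) = k + 1 for k ≥ 0. -/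
private def Gens : Set (Function.End ℤ) :=
  {(fun i => i + 1), (fun i => i - 1), (fun k => if k < 0 then k else k + 1)}

private abbrev C : Submonoid (Function.End ℤ) := Submonoid.closure Gens

private def tauP : Function.End ℤ := fun i => i + 1
private def tauM : Function.End ℤ := fun i => i - 1
private def theta0 : Function.End ℤ := fun k => if k < 0 then k else k + 1

private def tra (c : ℤ) : Function.End ℤ := fun n => n + c

private lemma trans_mem (c : ℤ) : tra c ∈ C := by
  induction c using Int.induction_on with
  | zero =>
      have h1 := Submonoid.one_mem C
      have he : tra 0 = (1 : Function.End ℤ) := by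
        funext n; show n + (0:ℤ) = n; omega
      rw [he]; exact h1
  | succ k ih =>
      have hg : tauP ∈ C := Submonoid.subset_closure (Or.inl rfl)
      have h := Submonoid.mul_mem C hg ih
      have he : tra ((k:ℤ)+1) = tauP * tra k := by
        funext n; show (n + ((k:ℤ)+1)) = (n + k) + 1; ring
      rw [he]; exact h
  | pred k ih =>
      have hg : tauM ∈ C := Submonoid.subset_closure (Or.inr (Or.inl rfl))
      have h := Submonoid.mul_mem C hg ih
      have he : tra (-(k:ℤ) - 1) = tauM * tra (-k) := by
        funext n; show (n + (-(k:ℤ) - 1)) = (n + -k) - 1; ring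
      rw [he]; exact h

private def theta (a : ℤ) : Function.End ℤ := fun k => if k < a then k else k + 1

private lemma theta_mem (a : ℤ) : theta a ∈ C := by
  have h0 : theta0 ∈ C := Submonoid.subset_closure (Or.inr (Or.inr rfl))
  have h := Submonoid.mul_mem C (Submonoid.mul_mem C (trans_mem a) h0) (trans_mem (-a))
  have he : theta a = tra a * theta0 * tra (-a) := by
    funext n
    show (if n < a then n else n + 1) = (if n + -a < 0 then n + -a else n + -a + 1) + a
    split_ifs <;> omega
  rw [he]; exact h

private lemma mem_closure_of (n : ℕ) : ∀ f : Function.End ℤ, StrictMono f →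
    (Set.range f)ᶜ.Finite → (Set.range f)ᶜ.ncard = n → f ∈ C := by
  induction n using Nat.strong_induction_on with
  | _ n ih =>
    intro f hf hfin hcard
    by_cases hempty : (Set.range f)ᶜ = ∅
    · -- f is surjective, hence a translation
      have hsurj : Function.Surjective f := by
        intro y
        by_contra h
        push_neg at h
        have hm : y ∈ (Set.range f)ᶜ := by
          simp only [Set.mem_compl_iff, Set.mem_range, not_exists]
          exact fun ⟨x, hx⟩ => h x hx
        rw [hempty] at hm
        exact hm
      have hstep : ∀ m : ℤ, f (m + 1) = f m + 1 := by
        intro m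
        obtain ⟨k, hk⟩ := hsurj (f m + 1)
        have h1 : m < k := by
          have : f m < f k := by omega
          exact hf.lt_iff_lt.mp this
        have h2 : k ≤ m + 1 := by
          by_contra hcon
          push_neg at hcon
          have := hf (show m + 1 < k by omega)
          have := hf (show m < m + 1 by omega)
          omega
        have hkm : k = m + 1 := by omega
        rw [hkm] at hk
        omega
      have hform : ∀ m : ℤ, f m = m + f 0 := by
        intro m
        induction m using Int.induction_on with
        | zero => omega
        | succ k ihk => rw [hstep k]; omega
        | pred k ihk =>
            have h3 := hstep (-(k:ℤ) - 1)
            have h2 : (-(k:ℤ) - 1) + 1 = -(k:ℤ) := by ring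
            rw [h2] at h3
            omega
      have hfe : f = tra (f 0) := funext hform
      rw [hfe]
      exact trans_mem _
    · obtain ⟨a, ha⟩ := Set.nonempty_iff_ne_empty.mpr hempty
      have hna : ∀ m, f m ≠ a := by
        intro m hm
        simp only [Set.mem_compl_iff, Set.mem_range, not_exists] at ha
        exact ha ⟨m, hm⟩
      set f' : Function.End ℤ := (fun m => if f m < a then f m else f m - 1) with hf'def
      have hf'mono : StrictMono f' := by
        intro x y hxy
        have h1 := hf hxy
        have h2 := hna x
        have h3 := hna y
        show (if f x < a then f x else f x - 1) < (if f y < a then f y else f y - 1)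
        split_ifs <;> omega
      have hsub : (Set.range f')ᶜ ⊆
          (fun x => if x < a then x else x - 1) '' ((Set.range f)ᶜ \ {a}) := by
        intro y hy
        simp only [Set.mem_compl_iff, Set.mem_range, not_exists] at hy
        by_cases hya : y < a
        · refine ⟨y, ⟨?_, ?_⟩, ?_⟩
          · simp only [Set.mem_compl_iff, Set.mem_range, not_exists]
            rintro ⟨m, hm⟩
            refine hy ⟨m, ?_⟩
            show (if f m < a then f m else f m - 1) = y
            rw [hm]
            simp [hya]
          · simp only [Set.mem_singleton_iff]
            omega
          · show (if y < a then y else y - 1) = y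
            simp [hya]
        · refine ⟨y + 1, ⟨?_, ?_⟩, ?_⟩
          · simp only [Set.mem_compl_iff, Set.mem_range, not_exists]
            rintro ⟨m, hm⟩
            refine hy ⟨m, ?_⟩
            show (if f m < a then f m else f m - 1) = y
            rw [hm]
            rw [if_neg (by omega)]
            omega
          · simp only [Set.mem_singleton_iff]
            omega
          · show (if y + 1 < a then y + 1 else y + 1 - 1) = y
            rw [if_neg (by omega)]
            omega
      have hfin' : (Set.range f')ᶜ.Finite :=
        Set.Finite.subset ((hfin.diff).image _) hsub
      have hlt : (Set.range f')ᶜ.ncard < n := by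
        have hA : (Set.range f')ᶜ.ncard ≤
            ((fun x => if x < a then x else x - 1) '' ((Set.range f)ᶜ \ {a})).ncard :=
          Set.ncard_le_ncard hsub ((hfin.diff).image _)
        have hB : ((fun x => if x < a then x else x - 1) '' ((Set.range f)ᶜ \ {a})).ncard ≤
            ((Set.range f)ᶜ \ {a}).ncard := Set.ncard_image_le (hfin.diff)
        have hC : ((Set.range f)ᶜ \ {a}).ncard < (Set.range f)ᶜ.ncard :=
          Set.ncard_diff_singleton_lt_of_mem ha hfin
        omega
      have hmem' := ih _ hlt f' hf'mono hfin' rfl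
      have hfe : f = theta a * f' := by
        funext m
        show f m = theta a (if f m < a then f m else f m - 1)
        have h2 := hna m
        simp only [theta]
        split_ifs <;> omega
      rw [hfe]
      exact Submonoid.mul_mem C (theta_mem a) hmem'

theorem stmt7 :
    ((Submonoid.closure
        ({(fun i => i + 1), (fun i => i - 1), (fun k => if k < 0 then k else k + 1)} :
          Set (Function.End ℤ))) : Set (Function.End ℤ)) =
      {f : Function.End ℤ | StrictMono f ∧ (Set.range f)ᶜ.Finite} := by
  ext f
  simp only [SetLike.mem_coe, Set.mem_setOf_eq]
  constructor
  · intro hmem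
    induction hmem using Submonoid.closure_induction with
    | mem g hg =>
        rcases hg with h | h | h
        · subst h
          refine ⟨fun x y hxy => by show x + 1 < y + 1; omega, ?_⟩
          have he : (Set.range (fun i => i + 1 : Function.End ℤ))ᶜ = ∅ := by
            ext y
            simp only [Set.mem_compl_iff, Set.mem_range, Set.mem_empty_iff_false,
              iff_false, not_not]
            exact ⟨y - 1, by omega⟩
          rw [he]; exact Set.finite_empty
        · subst h
          refine ⟨fun x y hxy => by show x - 1 < y - 1; omega, ?_⟩
          have he : (Set.range (fun i => i - 1 : Function.End ℤ))ᶜ = ∅ := by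
            ext y
            simp only [Set.mem_compl_iff, Set.mem_range, Set.mem_empty_iff_false,
              iff_false, not_not]
            exact ⟨y + 1, by omega⟩
          rw [he]; exact Set.finite_empty
        · subst h
          refine ⟨fun x y hxy => by
            show (if x < 0 then x else x + 1) < (if y < 0 then y else y + 1)
            split_ifs <;> omega, ?_⟩
          apply Set.Finite.subset (Set.finite_singleton (0:ℤ))
          intro y hy
          simp only [Set.mem_compl_iff, Set.mem_range, not_exists] at hy
          simp only [Set.mem_singleton_iff]
          by_contra hy0
          rcases lt_or_gt_of_ne hy0 with h | h
          · apply hy y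
            show (if y < 0 then y else y + 1) = y
            rw [if_pos h]
          · apply hy (y - 1)
            show (if y - 1 < 0 then y - 1 else y - 1 + 1) = y
            rw [if_neg (by omega)]
            omega
    | one =>
        refine ⟨fun x y hxy => hxy, ?_⟩
        have he : (Set.range (1 : Function.End ℤ))ᶜ = ∅ := by
          ext y
          simp only [Set.mem_compl_iff, Set.mem_range, Set.mem_empty_iff_false,
            iff_false, not_not]
          exact ⟨y, rfl⟩
        rw [he]; exact Set.finite_empty
    | mul g h _ _ hg hh =>
        refine ⟨hg.1.comp hh.1, ?_⟩
        have hsub : (Set.range (g * h))ᶜ ⊆ (Set.range g)ᶜ ∪ g '' (Set.range h)ᶜ := by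
          intro y hy
          simp only [Set.mem_compl_iff, Set.mem_range, not_exists] at hy
          by_cases hyg : y ∈ Set.range g
          · obtain ⟨x, hx⟩ := hyg
            right
            refine ⟨x, ?_, hx⟩
            simp only [Set.mem_compl_iff, Set.mem_range, not_exists]
            rintro ⟨z, hz⟩
            exact hy ⟨z, by show g (h z) = y; rw [hz, hx]⟩
          · exact Or.inl hyg
        exact Set.Finite.subset (hg.2.union (hh.2.image g)) hsub
  · rintro ⟨h1, h2⟩
    exact mem_closure_of _ f h1 h2 rfl
end

section
/- The monoid J_ℤ has exponential growth: there exist constants C > 0 and a > 1 such that the number of distinct elements of J_ℤ expressible as words of length at most n in the generators τ, τ^{-1}, θ_0 is at least C·aⁿ for all sufficiently large n. (In fact one may take a = 6^{1/7}.) -/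
/-!
Let `τ(i) = i + 1` and `θ = θ₀`. Distinct words of equal length in the letters `τ` and `θτ`
give distinct maps: every such word `w` of length `m` acts as `x ↦ x + m` far to the left, so
`τ w` takes the value `0`, whereas `θ` never does. Hence two words of the same length that act
equally start with the same letter, and cancelling it (both letters are injective) they agree. The `2 ^ k` words of
length `k` have length at most `2k` in the original generators, giving at least `√2 ^ n / 2`
elements in the ball of radius `n`.
-/

namespace Monoid

def wordBall {M : Type*} [Monoid M] (S : Set M) (n : ℕ) : Set M :=
  {f | ∃ L : List M, L.length ≤ n ∧ (∀ g ∈ L, g ∈ S) ∧ L.prod = f}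

theorem finite_wordBall {M : Type*} [Monoid M] {S : Set M} (hS : S.Finite) (n : ℕ) :
    (wordBall S n).Finite := by
  have : Finite S := hS
  refine ((List.finite_length_le S n).image fun L => (L.map Subtype.val).prod).subset ?_
  rintro f ⟨L, hlen, hmem, rfl⟩
  lift L to List S using hmem
  exact ⟨L, by simpa using hlen, rfl⟩

end Monoid

namespace Function.End

open Monoid

def tau : Function.End ℤ := fun i => i + 1

def theta : Function.End ℤ := fun k => if k < 0 then k else k + 1

theorem tau_injective : Function.Injective tau := fun a b h => by
  simpa [tau] using h

theorem theta_injective : Function.Injective theta := fun a b h => by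
  simp only [theta] at h
  split_ifs at h <;> omega

theorem theta_ne_zero (k : ℤ) : theta k ≠ 0 := by
  simp only [theta]
  split_ifs <;> omega

def letter (x : Bool) : Function.End ℤ := if x then theta * tau else tau

def code (b : List Bool) : Function.End ℤ := (b.map letter).prod

def word (b : List Bool) : List (Function.End ℤ) :=
  b.flatMap fun x => if x then [theta, tau] else [tau]

theorem prod_word (b : List Bool) : (word b).prod = code b := by
  induction b with
  | nil => rfl
  | cons x b ih =>
    simp only [word, code] at ih
    cases x <;> simp [word, code, letter, ih, mul_assoc]

theorem length_word_le (b : List Bool) : (word b).length ≤ 2 * b.length := by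
  induction b with
  | nil => simp [word]
  | cons x b ih => cases x <;> simp [word] at ih ⊢ <;> omega

theorem mem_word {b : List Bool} {g : Function.End ℤ} (hg : g ∈ word b) :
    g = tau ∨ g = theta := by
  simp only [word, List.mem_flatMap] at hg
  obtain ⟨x, -, hx⟩ := hg
  cases x <;> simp at hx <;> tauto

theorem code_apply_of_lt (b : List Bool) {x : ℤ} (hx : x + b.length < 0) :
    code b x = x + b.length := by
  induction b generalizing x with
  | nil => simp [code, one_def]
  | cons y b ih =>
    simp only [List.length_cons, Nat.cast_succ] at hx ⊢
    change letter y (code b x) = _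
    rw [ih (by omega)]
    cases y
    · change x + b.length + 1 = _
      ring
    · change theta (x + b.length + 1) = _
      rw [theta, if_pos (by omega)]
      ring

theorem code_cons_false_apply (b : List Bool) : code (false :: b) (-b.length - 1) = 0 := by
  change tau (code b _) = 0
  rw [code_apply_of_lt b (by omega), tau]
  omega

theorem code_cons_true_ne_zero (b : List Bool) (x : ℤ) : code (true :: b) x ≠ 0 :=
  theta_ne_zero _

theorem letter_injective (x : Bool) : Function.Injective (letter x) := by
  cases x
  · exact tau_injective
  · exact theta_injective.comp tau_injective

theorem eq_of_code_eq : ∀ {b b' : List Bool}, b.length = b'.length → code b = code b' → b = b'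
  | [], [], _, _ => rfl
  | x :: b, x' :: b', hlen, heq => by
    have hx : x = x' := by
      cases x <;> cases x'
      · rfl
      · exact absurd (heq ▸ code_cons_false_apply b) (code_cons_true_ne_zero b' _)
      · exact absurd (heq ▸ code_cons_false_apply b') (code_cons_true_ne_zero b _)
      · rfl
    subst hx
    have htail : code b = code b' :=
      funext fun y => letter_injective x (congrFun heq y)
    rw [eq_of_code_eq (by simpa using hlen) htail]

theorem two_pow_half_le_ncard_wordBall (n : ℕ) :
    2 ^ (n / 2) ≤ (wordBall {tau, (fun i => i - 1), theta} n).ncard := by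
  set k := n / 2
  have hinj : Function.Injective fun v : Fin k → Bool => code (List.ofFn v) :=
    fun v v' h => List.ofFn_injective (eq_of_code_eq (by simp) h)
  have hsub : Set.range (fun v : Fin k → Bool => code (List.ofFn v)) ⊆
      wordBall {tau, (fun i => i - 1), theta} n := by
    rintro _ ⟨v, rfl⟩
    refine ⟨word (List.ofFn v), ?_, fun g hg => ?_, prod_word _⟩
    · have := length_word_le (List.ofFn v)
      simp only [List.length_ofFn] at this
      omega
    · rcases mem_word hg with rfl | rfl
      exacts [Or.inl rfl, Or.inr (Or.inr rfl)]
  calc 2 ^ k = (Set.range fun v : Fin k → Bool => code (List.ofFn v)).ncard := by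
        rw [← Nat.card_coe_set_eq, Nat.card_range_of_injective hinj]
        simp
    _ ≤ _ := Set.ncard_le_ncard hsub
        (finite_wordBall (((Set.finite_singleton _).insert _).insert _) n)

end Function.End

theorem sqrt_two_pow_le (n : ℕ) : √2 ^ n ≤ 2 * 2 ^ (n / 2) := by
  have hsq : √2 ^ 2 = 2 := Real.sq_sqrt (by norm_num)
  calc √2 ^ n ≤ √2 ^ (2 * (n / 2) + 1) := pow_le_pow_right₀ Real.one_lt_sqrt_two.le (by omega)
    _ = √2 * 2 ^ (n / 2) := by rw [pow_succ, pow_mul, hsq, mul_comm]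
    _ ≤ 2 * 2 ^ (n / 2) := by gcongr; nlinarith

theorem stmt8 :
    ∃ C : ℝ, 0 < C ∧ ∃ a : ℝ, 1 < a ∧ ∃ N : ℕ, ∀ n ≥ N,
      C * a ^ n ≤
        (Set.ncard {f : Function.End ℤ | ∃ L : List (Function.End ℤ),
          L.length ≤ n ∧
          (∀ g ∈ L, g ∈ ({(fun i => i + 1), (fun i => i - 1),
            (fun k => if k < 0 then k else k + 1)} : Set (Function.End ℤ))) ∧
          L.prod = f} : ℝ) := by
  refine ⟨1 / 2, by norm_num, √2, Real.one_lt_sqrt_two, 0, fun n _ => ?_⟩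
  calc 1 / 2 * √2 ^ n ≤ 2 ^ (n / 2) := by linarith [sqrt_two_pow_le n]
    _ ≤ _ := by exact_mod_cast Function.End.two_pow_half_le_ncard_wordBall n
end

section
/- The monoid J_ℤ fails the right Klawe condition: there exist f, g, s ∈ J_ℤ with f ∘ s = g ∘ s but such that there is no t ∈ J_ℤ with t ∘ f = t ∘ g; concretely, θ_j ∘ θ_{j-1} = θ_{j-1} ∘ θ_{j-1} while θ_j ≠ θ_{j-1}, and J_ℤ is left cancellative. Consequently the opposite monoid of J_ℤ does not satisfy the Klawe condition. -/
private lemma theta_mono (h : ℤ) : StrictMono (fun k : ℤ => if k < h then k else k + 1) := by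
  intro a b hab
  dsimp only
  split_ifs <;> omega

private lemma theta_cofinite (h : ℤ) :
    (Set.range (fun k : ℤ => if k < h then k else k + 1))ᶜ.Finite := by
  apply Set.Finite.subset (Set.finite_singleton h)
  intro m hm
  simp only [Set.mem_compl_iff, Set.mem_range, not_exists] at hm
  by_contra hne
  simp only [Set.mem_singleton_iff] at hne
  rcases lt_or_gt_of_ne hne with hlt | hgt
  · exact hm m (by simp [hlt])
  · have := hm (m - 1)
    rw [if_neg (by omega)] at this
    omega

private lemma theta_comp (j : ℤ) :
    (fun k : ℤ => if k < j then k else k + 1) ∘ (fun k : ℤ => if k < j - 1 then k else k + 1) =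
      (fun k : ℤ => if k < j - 1 then k else k + 1) ∘
        (fun k : ℤ => if k < j - 1 then k else k + 1) := by
  funext k
  simp only [Function.comp]
  split_ifs <;> omega

private lemma theta_ne (j : ℤ) :
    (fun k : ℤ => if k < j then k else k + 1) ≠ (fun k : ℤ => if k < j - 1 then k else k + 1) := by
  intro h
  have := congrFun h (j - 1)
  rw [if_pos (by omega), if_neg (by omega)] at this
  omega

theorem stmt9 :
    (∀ j : ℤ,
      (fun k : ℤ => if k < j then k else k + 1) ∘ (fun k : ℤ => if k < j - 1 then k else k + 1) =
        (fun k : ℤ => if k < j - 1 then k else k + 1) ∘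
          (fun k : ℤ => if k < j - 1 then k else k + 1) ∧
      (fun k : ℤ => if k < j then k else k + 1) ≠ (fun k : ℤ => if k < j - 1 then k else k + 1)) ∧
    ∃ f g s : ℤ → ℤ,
      (StrictMono f ∧ (Set.range f)ᶜ.Finite) ∧ (StrictMono g ∧ (Set.range g)ᶜ.Finite) ∧
      (StrictMono s ∧ (Set.range s)ᶜ.Finite) ∧
      f ∘ s = g ∘ s ∧
      ¬ ∃ t : ℤ → ℤ, (StrictMono t ∧ (Set.range t)ᶜ.Finite) ∧ t ∘ f = t ∘ g := by
  refine ⟨fun j => ⟨theta_comp j, theta_ne j⟩, ?_⟩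
  refine ⟨(fun k : ℤ => if k < 1 then k else k + 1), (fun k : ℤ => if k < 0 then k else k + 1),
    (fun k : ℤ => if k < 0 then k else k + 1),
    ⟨theta_mono 1, theta_cofinite 1⟩, ⟨theta_mono 0, theta_cofinite 0⟩,
    ⟨theta_mono 0, theta_cofinite 0⟩, ?_, ?_⟩
  · have := theta_comp 1
    norm_num at this ⊢
    exact this
  · rintro ⟨t, ⟨ht, _⟩, heq⟩
    have hfg : (fun k : ℤ => if k < 1 then k else k + 1) = (fun k : ℤ => if k < 0 then k else k + 1) := by
      funext k
      exact ht.injective (congrFun heq k)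
    have := theta_ne 1
    norm_num at this
    exact this hfg
end

section
/- Let Q be the bi-infinite Toeplitz matrix on ℓ²(ℤ) with entries Q_{m,n} = d_{m-n}, where d_0 = 1, d_k = -i·3/(π²k²) for k > 0, and d_k = i·3/(π²k²) for k < 0. Then Q defines a bounded positive self-adjoint operator on ℓ²(ℤ). -/
open scoped ComplexConjugate ENNReal
set_option maxHeartbeats 1000000
set_option synthInstance.maxHeartbeats 1000000

noncomputable section Stmt13Aux

local notation "E2" => lp (fun _ : ℤ => ℂ) 2

lemma sgl_apply (i : ℤ) (a : ℂ) (j : ℤ) :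
    (lp.single (E := fun _ : ℤ => ℂ) 2 i a : ∀ _ : ℤ, ℂ) j = if j = i then a else 0 := by
  rw [lp.single_apply]
  split
  · rename_i h; subst h; simp
  · rename_i h; simp [Pi.single_apply, h]

lemma memShift (k : ℤ) (f : ∀ _ : ℤ, ℂ) (hf : Memℓp f 2) :
    Memℓp (fun m => f (m - k)) 2 := by
  have h2 : (0:ℝ) < (2:ℝ≥0∞).toReal := by norm_num
  rw [memℓp_gen_iff h2] at hf ⊢
  exact (Equiv.subRight k).summable_iff.mpr hf

def shiftE (k : ℤ) : E2 ≃ₗᵢ[ℂ] E2 where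
  toFun f := ⟨fun m => f (m - k), memShift k f (lp.memℓp f)⟩
  invFun f := ⟨fun m => f (m + k), by
    have := memShift (-k) f (lp.memℓp f)
    exact (by simpa [sub_neg_eq_add] using this : Memℓp (fun m => f (m + k)) 2)⟩
  map_add' f g := by ext m; rfl
  map_smul' c f := by ext m; rfl
  left_inv f := by ext m; simp
  right_inv f := by ext m; simp
  norm_map' f := by
    rw [lp.norm_eq_tsum_rpow (by norm_num) , lp.norm_eq_tsum_rpow (by norm_num) f]
    congr 1
    exact (Equiv.subRight k).tsum_eq (fun i => ‖f i‖ ^ (2 : ℝ≥0∞).toReal)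

def Tk (k : ℤ) : E2 →L[ℂ] E2 := (shiftE k).toLinearIsometry.toContinuousLinearMap

lemma Tk_apply (k : ℤ) (f : E2) (m : ℤ) : (Tk k f : ∀ _ : ℤ, ℂ) m = f (m - k) := rfl

lemma Tk_norm_le (k : ℤ) : ‖Tk k‖ ≤ 1 :=
  LinearIsometry.norm_toContinuousLinearMap_le _

lemma Tk_zero : Tk 0 = ContinuousLinearMap.id ℂ E2 := by
  refine ContinuousLinearMap.ext fun x => ?_
  ext m
  simp [Tk_apply]

lemma Tk_single (k n : ℤ) : Tk k (lp.single 2 n 1) = lp.single 2 (n + k) 1 := by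
  ext m
  rw [Tk_apply, sgl_apply, sgl_apply]
  simp only [sub_eq_iff_eq_add]


def dd (k : ℤ) : ℂ :=
  if k = 0 then 1
  else if 0 < k then -Complex.I * 3 / ((Real.pi : ℂ) ^ 2 * (k : ℂ) ^ 2)
  else Complex.I * 3 / ((Real.pi : ℂ) ^ 2 * (k : ℂ) ^ 2)

lemma norm_dd (k : ℤ) (hk : k ≠ 0) : ‖dd k‖ = 3 / Real.pi ^ 2 * (1 / (k : ℝ) ^ 2) := by
  have hπ : (0:ℝ) < Real.pi := Real.pi_pos
  have h1 : ‖((Real.pi : ℂ) ^ 2 * (k : ℂ) ^ 2)‖ = Real.pi ^ 2 * (k:ℝ) ^ 2 := by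
    rw [norm_mul, norm_pow, norm_pow, Complex.norm_real, Complex.norm_intCast,
      Real.norm_eq_abs, abs_of_pos hπ, sq_abs]
  have hknz : ((k:ℝ)) ≠ 0 := Int.cast_ne_zero.mpr hk
  unfold dd
  rw [if_neg hk]
  split
  · rw [norm_div, h1, norm_mul, norm_neg, Complex.norm_I, one_mul]
    simp only [Complex.norm_ofNat]
    field_simp
  · rw [norm_div, h1, norm_mul, Complex.norm_I, one_mul]
    simp only [Complex.norm_ofNat]
    field_simp

lemma dd_zero : dd 0 = 1 := rfl

lemma dd_neg (k : ℤ) : dd (-k) = conj (dd k) := by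
  rcases lt_trichotomy k 0 with h | h | h
  · have h1 : ¬ (-k = 0) := by omega
    have h2 : 0 < -k := by omega
    have h3 : ¬ (k = 0) := by omega
    have h4 : ¬ (0 < k) := by omega
    unfold dd
    rw [if_neg h1, if_pos h2, if_neg h3, if_neg h4]
    rw [map_div₀, map_mul, map_mul]
    simp [Complex.conj_I, map_ofNat, ← Complex.ofReal_intCast, ← Complex.ofReal_pow]
  · subst h; simp [dd_zero]
  · have h1 : ¬ (-k = 0) := by omega
    have h2 : ¬ (0 < -k) := by omega
    have h3 : ¬ (k = 0) := by omega
    unfold dd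
    rw [if_neg h1, if_neg h2, if_neg h3, if_pos h]
    rw [map_div₀, map_mul, map_mul]
    simp [Complex.conj_I, map_ofNat, ← Complex.ofReal_intCast, ← Complex.ofReal_pow]

lemma summable_aux : Summable (fun k : ℤ => 3 / Real.pi ^ 2 * (1 / (k : ℝ) ^ 2)) :=
  (Real.summable_one_div_int_pow.mpr one_lt_two).mul_left _

lemma tsum_aux : ∑' k : ℤ, 3 / Real.pi ^ 2 * (1 / (k : ℝ) ^ 2) = 1 := by
  have hπ : (0:ℝ) < Real.pi := Real.pi_pos
  have h1 : HasSum (fun n : ℕ => (1:ℝ) / ((n:ℤ) : ℝ) ^ 2) (Real.pi ^ 2 / 6) := by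
    simpa using hasSum_zeta_two
  have h2 : HasSum (fun n : ℕ => (1:ℝ) / (((-(n+1) : ℤ)) : ℝ) ^ 2) (Real.pi ^ 2 / 6) := by
    have h3 : HasSum (fun n : ℕ => (1:ℝ) / (((n+1:ℕ)):ℝ) ^ 2) (Real.pi ^ 2 / 6) := by
      refine (hasSum_nat_add_iff (f := fun n : ℕ => (1:ℝ)/(n:ℝ)^2) 1).mpr ?_
      simpa using hasSum_zeta_two
    refine h3.congr_fun fun n => ?_
    push_cast
    ring_nf
  have h : HasSum (fun k : ℤ => (1:ℝ) / (k : ℝ) ^ 2) (Real.pi ^ 2 / 6 + Real.pi ^ 2 / 6) :=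
    HasSum.of_nat_of_neg_add_one h1 h2
  rw [tsum_mul_left, h.tsum_eq]
  field_simp
  ring

lemma summable_norm_dd : Summable (fun k : ℤ => ‖dd k‖) := by
  have h0 : Summable (fun k : ℤ => if k = 0 then (1:ℝ) else 0) :=
    summable_of_ne_finset_zero (s := {0}) (by intro k hk; simp at hk; simp [hk])
  refine (h0.add summable_aux).congr fun k => ?_
  by_cases hk : k = 0
  · subst hk; simp [dd_zero]
  · rw [norm_dd k hk, if_neg hk, zero_add]


lemma summable_TT : Summable (fun k : ℤ => dd k • Tk k) := by
  refine Summable.of_norm_bounded summable_norm_dd fun k => ?_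
  calc ‖dd k • Tk k‖ ≤ ‖dd k‖ * ‖Tk k‖ := ContinuousLinearMap.opNorm_smul_le _ _
    _ ≤ ‖dd k‖ * 1 := mul_le_mul_of_nonneg_left (Tk_norm_le k) (norm_nonneg _)
    _ = ‖dd k‖ := mul_one _

def Qop : E2 →L[ℂ] E2 := ∑' k : ℤ, dd k • Tk k

lemma inner_single_Q (m n : ℤ) :
    (inner ℂ (lp.single 2 m (1 : ℂ)) (Qop (lp.single 2 n (1 : ℂ))) : ℂ) = dd (m - n) := by
  have h1 : HasSum (fun k : ℤ => dd k • Tk k) Qop := summable_TT.hasSum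
  have h2 := h1.mapL (ContinuousLinearMap.apply ℂ E2 (lp.single 2 n (1 : ℂ)))
  have h3 := h2.mapL (innerSL ℂ (lp.single 2 m (1 : ℂ)))
  simp only [ContinuousLinearMap.apply_apply, innerSL_apply_apply] at h3
  have h4 : ∀ k : ℤ,
      (inner ℂ (lp.single 2 m (1 : ℂ)) ((dd k • Tk k) (lp.single 2 n (1 : ℂ))) : ℂ)
        = if k = m - n then dd (m - n) else 0 := by
    intro k
    rw [ContinuousLinearMap.smul_apply, Tk_single, inner_smul_right,
      lp.inner_single_left]
    rw [sgl_apply]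
    by_cases h : m = n + k
    · rw [if_pos h, if_pos (by omega : k = m - n)]
      have : k = m - n := by omega
      subst this
      simp
    · rw [if_neg h, if_neg (by omega : ¬ k = m - n)]
      simp
  rw [funext_iff.mpr h4] at h3
  exact (h3.unique (hasSum_ite_eq (m - n) (dd (m - n))))

lemma Tk_adjoint (k : ℤ) : ContinuousLinearMap.adjoint (Tk k) = Tk (-k) := by
  symm
  rw [ContinuousLinearMap.eq_adjoint_iff]
  intro x y
  rw [lp.inner_eq_tsum, lp.inner_eq_tsum]
  rw [← (Equiv.addRight k).tsum_eq (fun i => (inner ℂ (x i) ((Tk k y) i) : ℂ))]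
  refine tsum_congr fun i => ?_
  simp only [Equiv.coe_addRight, Tk_apply, sub_neg_eq_add, add_sub_cancel_right]

lemma Q_selfAdjoint : IsSelfAdjoint Qop := by
  have h1 : star Qop = ∑' k : ℤ, star (dd k • Tk k) := by
    rw [Qop, tsum_star]
  have h2 : ∀ k : ℤ, star (dd k • Tk k) = dd (-k) • Tk (-k) := by
    intro k
    rw [star_smul, ContinuousLinearMap.star_eq_adjoint, Tk_adjoint, dd_neg]
    rfl
  have h5 := (Equiv.neg ℤ).tsum_eq (fun k => dd k • Tk k)
  simp only [Equiv.neg_apply] at h5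
  rw [IsSelfAdjoint, h1, tsum_congr h2, h5]
  rfl

def Kop : E2 →L[ℂ] E2 := ∑' k : ℤ, if k = 0 then 0 else dd k • Tk k

lemma Q_eq : Qop = Tk 0 + Kop := by
  rw [Qop, Summable.tsum_eq_add_tsum_ite summable_TT 0, dd_zero, one_smul]
  rfl

lemma K_bound : ∀ k : ℤ, ‖if k = 0 then (0 : E2 →L[ℂ] E2) else dd k • Tk k‖
    ≤ 3 / Real.pi ^ 2 * (1 / (k : ℝ) ^ 2) := by
  intro k
  by_cases hk : k = 0
  · subst hk; simp
  · rw [if_neg hk, ← norm_dd k hk]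
    calc ‖dd k • Tk k‖ ≤ ‖dd k‖ * ‖Tk k‖ := ContinuousLinearMap.opNorm_smul_le _ _
      _ ≤ ‖dd k‖ * 1 := mul_le_mul_of_nonneg_left (Tk_norm_le k) (norm_nonneg _)
      _ = ‖dd k‖ := mul_one _

lemma summable_K_norm :
    Summable (fun k : ℤ => ‖if k = 0 then (0 : E2 →L[ℂ] E2) else dd k • Tk k‖) :=
  Summable.of_nonneg_of_le (fun _ => norm_nonneg _) K_bound summable_aux

lemma K_norm : ‖Kop‖ ≤ 1 := by
  calc ‖Kop‖ ≤ ∑' k : ℤ, ‖if k = 0 then (0 : E2 →L[ℂ] E2) else dd k • Tk k‖ :=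
        norm_tsum_le_tsum_norm summable_K_norm
    _ ≤ ∑' k : ℤ, 3 / Real.pi ^ 2 * (1 / (k : ℝ) ^ 2) :=
        Summable.tsum_le_tsum K_bound summable_K_norm summable_aux
    _ = 1 := tsum_aux

lemma Q_pos : ∀ x : E2, 0 ≤ Qop.reApplyInnerSelf x := by
  intro x
  rw [ContinuousLinearMap.reApplyInnerSelf_apply]
  have hq : Qop x = x + Kop x := by
    rw [Q_eq, ContinuousLinearMap.add_apply, Tk_zero]
    rfl
  rw [hq, inner_add_left, map_add, inner_self_eq_norm_sq (𝕜 := ℂ) x]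
  have h2 : |RCLike.re (inner ℂ (Kop x) x : ℂ)| ≤ ‖Kop x‖ * ‖x‖ :=
    le_trans (RCLike.abs_re_le_norm _) (norm_inner_le_norm _ _)
  have h3 : ‖Kop x‖ ≤ ‖x‖ := by
    calc ‖Kop x‖ ≤ ‖Kop‖ * ‖x‖ := Kop.le_opNorm x
      _ ≤ 1 * ‖x‖ := mul_le_mul_of_nonneg_right K_norm (norm_nonneg _)
      _ = ‖x‖ := one_mul _
  have h4 := abs_le.mp h2
  nlinarith [norm_nonneg x, norm_nonneg (Kop x)]

end Stmt13Aux

theorem stmt13 :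
    ∃ Q : lp (fun _ : ℤ => ℂ) 2 →L[ℂ] lp (fun _ : ℤ => ℂ) 2,
      (∀ m n : ℤ,
        (inner ℂ (lp.single 2 m (1 : ℂ)) (Q (lp.single 2 n (1 : ℂ))) : ℂ) =
          if m - n = 0 then 1
          else if 0 < m - n then
            -Complex.I * 3 / ((Real.pi : ℂ) ^ 2 * ((m - n : ℤ) : ℂ) ^ 2)
          else Complex.I * 3 / ((Real.pi : ℂ) ^ 2 * ((m - n : ℤ) : ℂ) ^ 2)) ∧
      Q.IsPositive := by
  refine ⟨Qop, fun m n => ?_, Q_selfAdjoint.isSymmetric, Q_pos⟩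
  rw [inner_single_Q]
  rfl
end

section
/- Let A be a unital C*-algebra generated by self-adjoint elements {x_j : j ∈ ℤ} with x_j² = 1 and x_j x_k = -x_k x_j for j ≠ k, and let ω be a state on A that is invariant under the action of all finite permutations of ℤ (permuting the generators' indices). Then ω(x_j) = 0 for every j ∈ ℤ. -/
open scoped ComplexOrder

theorem stmt17 (A : Type*) [NormedRing A] [StarRing A] [CStarRing A]
    [NormedAlgebra ℂ A] [CompleteSpace A] [StarModule ℂ A]
    (x : ℤ → A)
    (hsa : ∀ j, IsSelfAdjoint (x j))
    (hsq : ∀ j, x j ^ 2 = 1)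
    (hac : ∀ j k, j ≠ k → x j * x k = -(x k * x j))
    (hgen : (StarAlgebra.adjoin ℂ (Set.range x)).topologicalClosure = ⊤)
    (ω : A →ₗ[ℂ] ℂ)
    (hpos : ∀ a, 0 ≤ ω (star a * a))
    (hone : ω 1 = 1)
    (α : Equiv.Perm ℤ → (A →⋆ₐ[ℂ] A))
    (hαmul : ∀ σ τ : Equiv.Perm ℤ, α (σ * τ) = (α σ).comp (α τ))
    (hα : ∀ σ j, α σ (x j) = x (σ j))
    (hinv : ∀ σ : Equiv.Perm ℤ, {i : ℤ | σ i ≠ i}.Finite → ∀ a, ω (α σ a) = ω a) :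
    ∀ j, ω (x j) = 0 := by
  intro j
  set c := ω (x j) with hc
  -- Step 1: permutation invariance gives ω (x k) = c for every k.
  have hEq : ∀ k : ℤ, ω (x k) = c := by
    intro k
    by_cases h : k = j
    · rw [h]
    · have hfin : {i : ℤ | Equiv.swap j k i ≠ i}.Finite := by
        apply Set.Finite.subset (Set.toFinite {j, k})
        intro i hi
        simp only [Set.mem_setOf_eq] at hi
        by_contra hni
        simp only [Set.mem_insert_iff, Set.mem_singleton_iff, not_or] at hni
        exact hi (Equiv.swap_apply_of_ne_of_ne hni.1 hni.2)
      have h1 := hinv (Equiv.swap j k) hfin (x j)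
      rw [hα, Equiv.swap_apply_left] at h1
      exact h1
  -- Step 2: the partial sums square to n.
  set S : ℕ → A := fun n => ∑ k ∈ Finset.range n, x (k : ℤ) with hSdef
  have hSsq : ∀ n : ℕ, S n * S n = (n : ℂ) • (1 : A) := by
    intro n
    induction n with
    | zero => simp [hSdef]
    | succ n ih =>
      have hstep : S (n + 1) = S n + x (n : ℤ) := by
        simp [hSdef, Finset.sum_range_succ]
      have hcross : S n * x (n : ℤ) + x (n : ℤ) * S n = 0 := by
        simp only [hSdef, Finset.sum_mul, Finset.mul_sum, ← Finset.sum_add_distrib]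
        apply Finset.sum_eq_zero
        intro k hk
        have hk' : (k : ℤ) ≠ (n : ℤ) := by
          exact_mod_cast Nat.ne_of_lt (Finset.mem_range.mp hk)
        rw [hac _ _ hk']
        exact neg_add_cancel _
      have hx2 : x (n : ℤ) * x (n : ℤ) = 1 := by
        have := hsq (n : ℤ); rwa [sq] at this
      rw [hstep]
      have hexp : (S n + x (n : ℤ)) * (S n + x (n : ℤ))
          = S n * S n + (S n * x (n : ℤ) + x (n : ℤ) * S n)
            + x (n : ℤ) * x (n : ℤ) := by noncomm_ring
      rw [hexp, ih, hcross, hx2, add_zero]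
      push_cast
      rw [add_smul, one_smul]
  -- star of the partial sums
  have hSstar : ∀ n : ℕ, star (S n) = S n := by
    intro n
    simp only [hSdef, star_sum]
    exact Finset.sum_congr rfl fun k _ => hsa (k : ℤ)
  -- ω on partial sums
  have hωS : ∀ n : ℕ, ω (S n) = (n : ℂ) * c := by
    intro n
    simp only [hSdef, map_sum, hEq, Finset.sum_const, Finset.card_range,
      nsmul_eq_mul]
  -- Step 3: positivity inequality
  have key : ∀ (n : ℕ) (s : ℝ), (0 : ℂ) ≤ (n : ℂ) - 2 * s * ((n : ℂ) * c) + s ^ 2 := by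
    intro n s
    have h := hpos (S n - ((s : ℂ)) • 1)
    have hstar : star (S n - ((s : ℂ)) • 1) = S n - ((s : ℂ)) • 1 := by
      rw [star_sub, hSstar, star_smul, star_one, Complex.star_def,
        Complex.conj_ofReal]
    rw [hstar] at h
    have hprod : (S n - ((s : ℂ)) • 1) * (S n - ((s : ℂ)) • 1)
        = S n * S n - ((2 * s : ℂ)) • S n + (((s : ℂ) ^ 2)) • (1 : A) := by
      simp only [sub_mul, mul_sub, smul_mul_assoc, mul_smul_comm, one_mul,
        mul_one, smul_smul]
      push_cast
      module
    rw [hprod, hSsq n] at h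
    rw [map_add, map_sub, map_smul, map_smul, map_smul, hone, hωS] at h
    simpa [smul_eq_mul, mul_one] using h
  -- extract real and imaginary information
  have him : c.im = 0 := by
    have h := key 1 1
    rw [Complex.le_def] at h
    have := h.2
    simp [Complex.sub_im, Complex.add_im, Complex.mul_im] at this
    linarith [this]
  have hre : c.re = 0 := by
    by_contra hne
    have hr2 : 0 < c.re ^ 2 := by positivity
    obtain ⟨n, hn⟩ := exists_nat_gt (1 / c.re ^ 2)
    have h := key n ((n : ℝ) * c.re)
    rw [Complex.le_def] at h
    have hre' := h.1
    simp only [Complex.add_re, Complex.sub_re, Complex.mul_re, Complex.mul_im,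
      Complex.ofReal_re, Complex.ofReal_im, Complex.natCast_re, Complex.natCast_im,
      Complex.zero_re, Complex.ofReal_pow, Complex.ofReal_mul,
      Complex.re_ofNat, Complex.im_ofNat,
      mul_zero, zero_mul, sub_zero, zero_sub, pow_two] at hre'
    have h1n : 1 < (n : ℝ) * c.re ^ 2 := by
      rw [div_lt_iff₀ hr2] at hn
      linarith
    nlinarith [hre', h1n, hr2]
  exact Complex.ext hre him
end
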